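/- arXiv:1609.02051 — 2 statements merged into one kernel-verified Lean document; each statement's English description precedes it below -/
import Mathlib

section
/- Let 0 < r' < r < 2, ζ ∈ 𝔻 with 1 - |ζ| < r' and |e^{iθ} - 1| < r - r' where ζ = |ζ|e^{iθ}. Set ρ(ζ) = (|ζ| + r' - 1)/(1 - (1-r')|ζ|). Then for all t with |t| < ρ(ζ), the point f_ζ(t) = (t+ζ)/(1+\bar{ζ}t) satisfies |f_ζ(t) - 1| < r. -/
/-!
Writing `ζ = a e` with `a = ‖ζ‖` and `‖e‖ = 1`, one has the identity
`f_ζ(t) - e = (1 - a)(t - e) / (1 + conj ζ t)`, hence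
`‖f_ζ(t) - e‖ ≤ (1 - a)(1 + ‖t‖) / (1 - a‖t‖)`, and this bound is `< r'` exactly when `‖t‖ < ρ(ζ)`.
The triangle inequality through `e` then gives `‖f_ζ(t) - 1‖ < r' + (r - r') = r`.
-/

open Complex ComplexConjugate

lemma mobius_sub_eq {ζ e t : ℂ} {a : ℝ} (he : ‖e‖ = 1) (hζ : ζ = a * e)
    (hden : 1 + conj ζ * t ≠ 0) :
    (t + ζ) / (1 + conj ζ * t) - e = (1 - a) * (t - e) / (1 + conj ζ * t) := by
  have hee : e * conj e = 1 := by rw [mul_conj', he]; norm_num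
  rw [div_sub' hden, hζ, map_mul, conj_ofReal]
  congr 1
  linear_combination (-(a : ℂ) * t) * hee

lemma one_sub_mul_le_norm_one_add_conj_mul (ζ t : ℂ) : 1 - ‖ζ‖ * ‖t‖ ≤ ‖1 + conj ζ * t‖ := by
  simpa [norm_mul] using norm_sub_norm_le (1 : ℂ) (-(conj ζ * t))

lemma norm_mobius_sub_le {ζ e t : ℂ} {a : ℝ} (he : ‖e‖ = 1) (ha0 : 0 ≤ a) (ha1 : a ≤ 1)
    (hζ : ζ = a * e) (ht : a * ‖t‖ < 1) :
    ‖(t + ζ) / (1 + conj ζ * t) - e‖ ≤ (1 - a) * (1 + ‖t‖) / (1 - a * ‖t‖) := by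
  have hnorm : ‖ζ‖ = a := by rw [hζ, norm_mul, he, norm_real, Real.norm_of_nonneg ha0, mul_one]
  have hden : 1 - a * ‖t‖ ≤ ‖1 + conj ζ * t‖ := hnorm ▸ one_sub_mul_le_norm_one_add_conj_mul ζ t
  have hden_pos : 0 < ‖1 + conj ζ * t‖ := by linarith
  rw [mobius_sub_eq he hζ (norm_pos_iff.mp hden_pos), norm_div, norm_mul,
    show (1 : ℂ) - a = ((1 - a : ℝ) : ℂ) by push_cast; ring, norm_real,
    Real.norm_of_nonneg (by linarith)]
  gcongr
  simpa [he, add_comm] using norm_sub_le t e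

/-- `s < ρ` is a rearrangement of `(1 - a)(1 + s) < r' (1 - a s)`. -/
lemma mobius_bound_lt_of_lt_radius {a r' s : ℝ} (ha0 : 0 ≤ a) (ha1 : a < 1) (hr' : 0 < r')
    (hs : 0 ≤ s) (h : s < (a + r' - 1) / (1 - (1 - r') * a)) :
    a * s < 1 ∧ (1 - a) * (1 + s) / (1 - a * s) < r' := by
  have hD : 0 < 1 - (1 - r') * a := by nlinarith
  have key : (1 - a) * (1 + s) < r' * (1 - a * s) := by
    nlinarith [(lt_div_iff₀ hD).mp h]
  have has : 0 < 1 - a * s := by nlinarith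
  exact ⟨by linarith, (div_lt_iff₀ has).mpr key⟩

theorem mobius_image_near_one_general (r r' : ℝ)
    (ζ : ℂ) (hζ : ‖ζ‖ < 1)
    (θ : ℝ) (hpolar : ζ = (‖ζ‖ : ℂ) * Complex.exp (θ * Complex.I))
    (h1 : 1 - ‖ζ‖ < r') (h2 : ‖Complex.exp (θ * Complex.I) - 1‖ < r - r') :
    ∀ t : ℂ, ‖t‖ < (‖ζ‖ + r' - 1) / (1 - (1 - r') * ‖ζ‖) →
      ‖(t + ζ) / (1 + (starRingEnd ℂ) ζ * t) - 1‖ < r := by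
  intro t ht
  have hr' : 0 < r' := by linarith
  obtain ⟨hat, hbound⟩ :=
    mobius_bound_lt_of_lt_radius (norm_nonneg ζ) hζ hr' (norm_nonneg t) ht
  have hnear_e := (norm_mobius_sub_le (norm_exp_ofReal_mul_I θ) (norm_nonneg ζ) hζ.le hpolar
    hat).trans_lt hbound
  calc ‖(t + ζ) / (1 + conj ζ * t) - 1‖
      ≤ ‖(t + ζ) / (1 + conj ζ * t) - exp (θ * I)‖ + ‖exp (θ * I) - 1‖ :=
        norm_sub_le_norm_sub_add_norm_sub _ _ _
    _ < r' + (r - r') := add_lt_add hnear_e h2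
    _ = r := by ring

theorem mobius_image_near_one (r r' : ℝ) (hr' : 0 < r') (hr'r : r' < r) (hr : r < 2)
    (ζ : ℂ) (hζ0 : ζ ≠ 0) (hζ : ‖ζ‖ < 1)
    (θ : ℝ) (hpolar : ζ = (‖ζ‖ : ℂ) * Complex.exp (θ * Complex.I))
    (h1 : 1 - ‖ζ‖ < r') (h2 : ‖Complex.exp (θ * Complex.I) - 1‖ < r - r') :
    ∀ t : ℂ, ‖t‖ < (‖ζ‖ + r' - 1) / (1 - (1 - r') * ‖ζ‖) →
      ‖(t + ζ) / (1 + (starRingEnd ℂ) ζ * t) - 1‖ < r :=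
  mobius_image_near_one_general r r' ζ hζ θ hpolar h1 h2
end

section
/- Let G ⊆ 𝔻 be a plane domain with 𝔻_r = {ζ ∈ 𝔻 : |ζ-1| < r} ⊆ G for some r ∈ (0,2). Then limsup_{ζ→1, ζ∈G} (1 - s_G(ζ))/(1 - |ζ|) ≤ (2-r)/r. -/
/-!
For `ζ ∈ G` near `1` the disc automorphism `φ_ζ z = (z - ζ) / (1 - conj ζ * z)` maps `G`
injectively into `𝔻` with `φ_ζ ζ = 0`. From
`1 - |φ_ζ z|² = (1 - |ζ|²)(1 - |z|²) / |1 - conj ζ * z|²`, `|1 - conj ζ * z| ≥ |z - 1| - |ζ - 1|`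
and `1 - |z|² ≤ |z - 1| (2 - |z - 1|)`, every `z ∈ 𝔻 \ 𝔻_r` satisfies
`1 - |φ_ζ z|² ≤ (1 - |ζ|) K(ζ)` with `K(ζ) = 2r(2 - r) / (r - |ζ - 1|)²`. Since `𝔻_r ⊆ G`, the image
`φ_ζ(G)` therefore contains the disc of radius `√(1 - (1 - |ζ|) K(ζ))`, whence
`(1 - s_G(ζ)) / (1 - |ζ|) ≤ K(ζ) / (1 + √(1 - (1 - |ζ|) K(ζ)))`, a continuous function of `ζ`
whose value at `1` is `K(1) / 2 = (2 - r) / r`.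
-/

open Metric Set Filter Topology

/-- The squeezing function of a plane domain `G` at a point `ζ`. -/
noncomputable def squeezingFn1 (G : Set ℂ) (ζ : ℂ) : ℝ :=
  sSup (insert 0 {ρ : ℝ | 0 < ρ ∧ ∃ f : ℂ → ℂ,
    DifferentiableOn ℂ f G ∧ Set.InjOn f G ∧ f '' G ⊆ Metric.ball 0 1 ∧ f ζ = 0 ∧
    Metric.ball 0 ρ ⊆ f '' G})

open ComplexConjugate

noncomputable def discMobius (ζ z : ℂ) : ℂ := (z - ζ) / (1 - conj ζ * z)

lemma sq_norm_one_sub_conj_mul_sub_sq_norm_sub (ζ z : ℂ) :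
    ‖1 - conj ζ * z‖ ^ 2 - ‖z - ζ‖ ^ 2 = (1 - ‖ζ‖ ^ 2) * (1 - ‖z‖ ^ 2) := by
  simp only [Complex.sq_norm, Complex.normSq_apply, Complex.sub_re, Complex.sub_im,
    Complex.mul_re, Complex.mul_im, Complex.one_re, Complex.one_im, Complex.conj_re,
    Complex.conj_im]
  ring

section discMobius

variable {ζ z : ℂ}

lemma one_sub_conj_mul_ne_zero (hζ : ‖ζ‖ < 1) (hz : ‖z‖ < 1) : 1 - conj ζ * z ≠ 0 := by
  refine sub_ne_zero.2 fun h => ?_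
  have : ‖conj ζ * z‖ < 1 := by
    rw [norm_mul, Complex.norm_conj]
    nlinarith [norm_nonneg ζ, norm_nonneg z]
  rw [← h, norm_one] at this
  exact lt_irrefl _ this

lemma one_sub_sq_norm_discMobius (hζ : ‖ζ‖ < 1) (hz : ‖z‖ < 1) :
    1 - ‖discMobius ζ z‖ ^ 2 = (1 - ‖ζ‖ ^ 2) * (1 - ‖z‖ ^ 2) / ‖1 - conj ζ * z‖ ^ 2 := by
  have hD : 0 < ‖1 - conj ζ * z‖ := norm_pos_iff.2 (one_sub_conj_mul_ne_zero hζ hz)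
  rw [discMobius, norm_div, div_pow, one_sub_div (by positivity),
    sq_norm_one_sub_conj_mul_sub_sq_norm_sub]

lemma norm_discMobius_lt_one (hζ : ‖ζ‖ < 1) (hz : ‖z‖ < 1) : ‖discMobius ζ z‖ < 1 := by
  have hD : 0 < ‖1 - conj ζ * z‖ := norm_pos_iff.2 (one_sub_conj_mul_ne_zero hζ hz)
  have : 0 < 1 - ‖discMobius ζ z‖ ^ 2 := by
    rw [one_sub_sq_norm_discMobius hζ hz]
    refine div_pos (mul_pos ?_ ?_) (by positivity) <;> nlinarith [norm_nonneg ζ, norm_nonneg z]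
  nlinarith [norm_nonneg (discMobius ζ z)]

lemma discMobius_neg_discMobius (hζ : ‖ζ‖ < 1) (hz : ‖z‖ < 1) :
    discMobius (-ζ) (discMobius ζ z) = z := by
  have hD := one_sub_conj_mul_ne_zero hζ hz
  have hζζ : 1 - conj ζ * ζ ≠ 0 := one_sub_conj_mul_ne_zero hζ hζ
  rw [discMobius, discMobius, map_neg, div_sub' hD, neg_mul, sub_neg_eq_add, mul_div_assoc',
    one_add_div hD, div_div_div_cancel_right₀ hD, div_eq_iff]
  · ring
  · convert hζζ using 1; ring

lemma discMobius_discMobius_neg (hζ : ‖ζ‖ < 1) (hz : ‖z‖ < 1) :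
    discMobius ζ (discMobius (-ζ) z) = z := by
  simpa using discMobius_neg_discMobius (ζ := -ζ) (by rwa [norm_neg]) hz

end discMobius

lemma one_sub_sq_norm_le (z : ℂ) : 1 - ‖z‖ ^ 2 ≤ ‖z - 1‖ * (2 - ‖z - 1‖) := by
  have h₁ : 1 ≤ ‖z‖ + ‖z - 1‖ := by simpa using norm_sub_le z (z - 1)
  have h₂ : ‖z - 1‖ ≤ ‖z‖ + 1 := by simpa using norm_sub_le z 1
  nlinarith [norm_nonneg z]

lemma norm_sub_one_sub_le_norm_one_sub_conj_mul {ζ z : ℂ} (hz : ‖z‖ ≤ 1) :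
    ‖z - 1‖ - ‖ζ - 1‖ ≤ ‖1 - conj ζ * z‖ := by
  have : ‖(conj ζ - 1) * z‖ ≤ ‖ζ - 1‖ := by
    rw [norm_mul, ← Complex.norm_conj (ζ - 1), map_sub, map_one]
    exact mul_le_of_le_one_right (norm_nonneg _) hz
  have h : ‖z - 1‖ ≤ ‖1 - conj ζ * z‖ + ‖(conj ζ - 1) * z‖ := by
    rw [← norm_neg, show -(z - 1) = (1 - conj ζ * z) + (conj ζ - 1) * z by ring]
    exact norm_add_le _ _
  linarith

-- `s ↦ s (2 - s) / (s - t)²` is antitone on `(t, 2]`, with denominators cleared.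
lemma mul_two_sub_mul_sq_sub_le {r s t : ℝ} (ht : 0 ≤ t) (htr : t < r) (hrs : r ≤ s)
    (hs : s ≤ 2) : s * (2 - s) * (r - t) ^ 2 ≤ r * (2 - r) * (s - t) ^ 2 := by
  nlinarith [mul_nonneg (mul_nonneg (by linarith : (0:ℝ) ≤ 2 - r) (by linarith : (0:ℝ) ≤ s - r))
      (by nlinarith : (0:ℝ) ≤ r * s - t ^ 2),
    mul_nonneg (mul_nonneg (by linarith : (0:ℝ) ≤ s) (sq_nonneg (r - t)))
      (by linarith : (0:ℝ) ≤ s - r)]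

noncomputable def lensConstant (r : ℝ) (ζ : ℂ) : ℝ := 2 * r * (2 - r) / (r - ‖ζ - 1‖) ^ 2

lemma one_sub_sq_norm_discMobius_le {r : ℝ} {ζ z : ℂ} (hζ : ‖ζ‖ < 1) (hz : ‖z‖ < 1)
    (hζr : ‖ζ - 1‖ < r) (hzr : r ≤ ‖z - 1‖) :
    1 - ‖discMobius ζ z‖ ^ 2 ≤ (1 - ‖ζ‖) * lensConstant r ζ := by
  set s := ‖z - 1‖
  set t := ‖ζ - 1‖
  have hD : 0 < ‖1 - conj ζ * z‖ := norm_pos_iff.2 (one_sub_conj_mul_ne_zero hζ hz)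
  have hs : s ≤ 2 := by linarith [norm_sub_le z 1, norm_one (α := ℂ)]
  have hr : 0 ≤ r * (2 - r) := mul_nonneg (by linarith [norm_nonneg (ζ - 1)]) (by linarith)
  have hζ₁ : 1 - ‖ζ‖ ^ 2 ≤ 2 * (1 - ‖ζ‖) := by nlinarith [norm_nonneg ζ]
  have hz₁ : 0 ≤ 1 - ‖z‖ ^ 2 := by nlinarith [norm_nonneg z]
  have hD₁ : (s - t) ^ 2 ≤ ‖1 - conj ζ * z‖ ^ 2 := by
    have := norm_sub_one_sub_le_norm_one_sub_conj_mul (ζ := ζ) hz.le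
    nlinarith [norm_nonneg (ζ - 1)]
  rw [one_sub_sq_norm_discMobius hζ hz, lensConstant, div_le_iff₀ (by positivity)]
  have hrt : 0 < r - t := by linarith
  calc (1 - ‖ζ‖ ^ 2) * (1 - ‖z‖ ^ 2)
      ≤ 2 * (1 - ‖ζ‖) * (s * (2 - s)) := mul_le_mul hζ₁ (one_sub_sq_norm_le z) hz₁ (by linarith)
    _ ≤ 2 * (1 - ‖ζ‖) * (r * (2 - r) * (s - t) ^ 2 / (r - t) ^ 2) := by
        gcongr
        rw [le_div_iff₀ (by positivity)]
        exact mul_two_sub_mul_sq_sub_le (norm_nonneg _) hζr hzr hs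
    _ = (1 - ‖ζ‖) * (2 * r * (2 - r) / (r - t) ^ 2) * (s - t) ^ 2 := by ring
    _ ≤ (1 - ‖ζ‖) * (2 * r * (2 - r) / (r - t) ^ 2) * ‖1 - conj ζ * z‖ ^ 2 :=
        mul_le_mul_of_nonneg_left hD₁
          (mul_nonneg (by linarith) (div_nonneg (by linarith) (sq_nonneg _)))

def squeezingRadii (G : Set ℂ) (ζ : ℂ) : Set ℝ :=
  {ρ : ℝ | 0 < ρ ∧ ∃ f : ℂ → ℂ,
    DifferentiableOn ℂ f G ∧ InjOn f G ∧ f '' G ⊆ ball 0 1 ∧ f ζ = 0 ∧ ball 0 ρ ⊆ f '' G}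

lemma squeezingFn1_eq_sSup (G : Set ℂ) (ζ : ℂ) :
    squeezingFn1 G ζ = sSup (insert 0 (squeezingRadii G ζ)) := rfl

lemma le_of_ball_zero_subset_ball_zero {ρ R : ℝ} (hρ : 0 < ρ)
    (h : ball (0 : ℂ) ρ ⊆ ball 0 R) : ρ ≤ R := by
  by_contra! hR
  have hx : ((max R 0 : ℝ) : ℂ) ∈ ball (0 : ℂ) ρ := by
    rw [mem_ball_zero_iff, Complex.norm_real, Real.norm_of_nonneg (le_max_right _ _)]
    exact max_lt hR hρ
  have := mem_ball_zero_iff.1 (h hx)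
  rw [Complex.norm_real, Real.norm_of_nonneg (le_max_right _ _)] at this
  exact (le_max_left R 0).not_gt this

lemma le_one_of_mem_squeezingRadii {G : Set ℂ} {ζ : ℂ} {ρ : ℝ} (hρ : ρ ∈ squeezingRadii G ζ) :
    ρ ≤ 1 := by
  obtain ⟨hρ, f, -, -, hmaps, -, hball⟩ := hρ
  exact le_of_ball_zero_subset_ball_zero hρ (hball.trans hmaps)

lemma one_mem_upperBounds_squeezingRadii (G : Set ℂ) (ζ : ℂ) :
    1 ∈ upperBounds (insert 0 (squeezingRadii G ζ)) :=
  forall_mem_insert.2 ⟨zero_le_one, fun _ => le_one_of_mem_squeezingRadii⟩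

lemma squeezingFn1_le_one (G : Set ℂ) (ζ : ℂ) : squeezingFn1 G ζ ≤ 1 := by
  rw [squeezingFn1_eq_sSup]
  exact csSup_le (insert_nonempty _ _) (one_mem_upperBounds_squeezingRadii G ζ)

lemma le_squeezingFn1 {G : Set ℂ} {ζ : ℂ} {ρ : ℝ} (hρ : ρ ∈ squeezingRadii G ζ) :
    ρ ≤ squeezingFn1 G ζ := by
  rw [squeezingFn1_eq_sSup]
  exact le_csSup ⟨1, one_mem_upperBounds_squeezingRadii G ζ⟩ (mem_insert_of_mem _ hρ)

section lens

variable {G : Set ℂ} {r : ℝ}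

lemma ball_subset_image_discMobius (hG : {z : ℂ | ‖z‖ < 1 ∧ ‖z - 1‖ < r} ⊆ G) {ζ : ℂ}
    (hζ : ‖ζ‖ < 1) (hζr : ‖ζ - 1‖ < r) {ρ : ℝ} (hρ₁ : ρ ≤ 1)
    (hρ : ρ ^ 2 ≤ 1 - (1 - ‖ζ‖) * lensConstant r ζ) :
    ball 0 ρ ⊆ discMobius ζ '' G := by
  intro w hw
  rw [mem_ball_zero_iff] at hw
  have hw₁ : ‖w‖ < 1 := hw.trans_le hρ₁
  set z := discMobius (-ζ) w
  have hz : ‖z‖ < 1 := norm_discMobius_lt_one (by rwa [norm_neg]) hw₁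
  have hwz : discMobius ζ z = w := discMobius_discMobius_neg hζ hw₁
  refine ⟨z, hG ⟨hz, ?_⟩, hwz⟩
  by_contra! hzr
  have := one_sub_sq_norm_discMobius_le hζ hz hζr hzr
  rw [hwz] at this
  nlinarith [norm_nonneg w]

lemma sqrt_mem_squeezingRadii (hr : r ≤ 2) (hG : {z : ℂ | ‖z‖ < 1 ∧ ‖z - 1‖ < r} ⊆ G)
    (hG₁ : G ⊆ ball 0 1) {ζ : ℂ} (hζG : ζ ∈ G) (hζr : ‖ζ - 1‖ < r)
    (hE : (1 - ‖ζ‖) * lensConstant r ζ < 1) :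
    √(1 - (1 - ‖ζ‖) * lensConstant r ζ) ∈ squeezingRadii G ζ := by
  have hG₁' : ∀ z ∈ G, ‖z‖ < 1 := fun z hz => mem_ball_zero_iff.1 (hG₁ hz)
  have hζ := hG₁' ζ hζG
  have hE₀ : 0 ≤ (1 - ‖ζ‖) * lensConstant r ζ :=
    mul_nonneg (by linarith) (div_nonneg (by nlinarith [norm_nonneg (ζ - 1)]) (sq_nonneg _))
  refine ⟨Real.sqrt_pos.2 (by linarith), discMobius ζ, ?_, ?_, ?_, by simp [discMobius], ?_⟩
  · exact DifferentiableOn.div (by fun_prop) (by fun_prop)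
      fun z hz => one_sub_conj_mul_ne_zero hζ (hG₁' z hz)
  · exact (LeftInvOn.injOn fun z hz => discMobius_neg_discMobius hζ hz).mono hG₁'
  · rintro _ ⟨z, hz, rfl⟩
    exact mem_ball_zero_iff.2 (norm_discMobius_lt_one hζ (hG₁' z hz))
  · exact ball_subset_image_discMobius hG hζ hζr (Real.sqrt_le_one.2 (by linarith))
      (Real.sq_sqrt (by linarith)).le

end lens

lemma one_sub_sqrt_one_sub_mul_div {a K : ℝ} (ha : a ≠ 0) (h : a * K ≤ 1) :
    (1 - √(1 - a * K)) / a = K / (1 + √(1 - a * K)) := by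
  have hsq := Real.sq_sqrt (sub_nonneg.2 h)
  have hpos : 0 < 1 + √(1 - a * K) := by positivity
  rw [div_eq_div_iff ha hpos.ne']
  linear_combination -hsq

lemma one_mem_closure_lens {r : ℝ} (hr : 0 < r) :
    (1 : ℂ) ∈ closure {z : ℂ | ‖z‖ < 1 ∧ ‖z - 1‖ < r} := by
  refine Metric.mem_closure_iff.2 fun ε hε => ?_
  obtain ⟨t, ht, htm⟩ := exists_between (lt_min hε (lt_min hr one_pos))
  obtain ⟨htε, htr, ht₁⟩ : t < ε ∧ t < r ∧ t < 1 := by simpa only [lt_min_iff] using htm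
  refine ⟨((1 - t : ℝ) : ℂ), ⟨?_, ?_⟩, ?_⟩
  · rw [Complex.norm_real, Real.norm_of_nonneg (by linarith)]; linarith
  · rw [← Complex.ofReal_one, ← Complex.ofReal_sub, Complex.norm_real]; simpa [abs_of_pos ht]
  · rw [dist_eq_norm, ← Complex.ofReal_one, ← Complex.ofReal_sub, Complex.norm_real]
    simpa [abs_of_pos ht]

noncomputable def squeezingBound (r : ℝ) (ζ : ℂ) : ℝ :=
  lensConstant r ζ / (1 + √(1 - (1 - ‖ζ‖) * lensConstant r ζ))

section limit

variable {r : ℝ}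

lemma continuousAt_lensConstant (hr : r ≠ 0) : ContinuousAt (lensConstant r) 1 :=
  continuousAt_const.div (by fun_prop) (by simpa using hr)

lemma tendsto_squeezingBound (hr : r ≠ 0) :
    Tendsto (squeezingBound r) (𝓝 1) (𝓝 ((2 - r) / r)) := by
  have hK := continuousAt_lensConstant hr
  have : ContinuousAt (squeezingBound r) 1 := hK.div (by fun_prop) (by positivity)
  convert this.tendsto using 2
  simp only [squeezingBound, lensConstant, sub_self, norm_zero, sub_zero, norm_one, zero_mul,
    Real.sqrt_one]
  field_simp
  ring

lemma eventually_one_sub_squeezingFn1_div_le {G : Set ℂ} (hr : 0 < r) (hr₂ : r ≤ 2)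
    (hG : {z : ℂ | ‖z‖ < 1 ∧ ‖z - 1‖ < r} ⊆ G) (hG₁ : G ⊆ ball 0 1) :
    ∀ᶠ ζ in 𝓝[G] 1, (1 - squeezingFn1 G ζ) / (1 - ‖ζ‖) ≤ squeezingBound r ζ := by
  have hK := continuousAt_lensConstant hr.ne'
  have hE : ∀ᶠ ζ in 𝓝 (1 : ℂ), (1 - ‖ζ‖) * lensConstant r ζ < 1 :=
    ContinuousAt.eventually_lt (by fun_prop) continuousAt_const (by simp)
  filter_upwards [self_mem_nhdsWithin, nhdsWithin_le_nhds (ball_mem_nhds 1 hr),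
    nhdsWithin_le_nhds hE] with ζ hζG hζr hE
  rw [mem_ball, dist_eq_norm] at hζr
  have hζ : 0 < 1 - ‖ζ‖ := sub_pos.2 (mem_ball_zero_iff.1 (hG₁ hζG))
  calc (1 - squeezingFn1 G ζ) / (1 - ‖ζ‖)
      ≤ (1 - √(1 - (1 - ‖ζ‖) * lensConstant r ζ)) / (1 - ‖ζ‖) := by
        gcongr
        exact le_squeezingFn1 (sqrt_mem_squeezingRadii hr₂ hG hG₁ hζG hζr hE)
    _ = squeezingBound r ζ := one_sub_sqrt_one_sub_mul_div hζ.ne' hE.le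

end limit

theorem squeezing_limsup_near_one_general (G : Set ℂ)
    (r : ℝ) (hr0 : 0 < r) (hr2 : r < 2)
    (h1 : {ζ : ℂ | ‖ζ‖ < 1 ∧ ‖ζ - 1‖ < r} ⊆ G)
    (h2 : G ⊆ Metric.ball 0 1) :
    Filter.limsup (fun ζ : ℂ => (1 - squeezingFn1 G ζ) / (1 - ‖ζ‖))
      (nhdsWithin 1 G) ≤ (2 - r) / r := by
  have hv := (tendsto_squeezingBound hr0.ne').mono_left (nhdsWithin_le_nhds (s := G))
  have : (𝓝[G] (1 : ℂ)).NeBot :=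
    mem_closure_iff_nhdsWithin_neBot.1 (closure_mono h1 (one_mem_closure_lens hr0))
  have hcobdd : IsCoboundedUnder (· ≤ ·) (𝓝[G] 1) fun ζ => (1 - squeezingFn1 G ζ) / (1 - ‖ζ‖) :=
    isCoboundedUnder_le_of_eventually_le _ (x := 0) <| eventually_mem_nhdsWithin.mono
      fun ζ hζG => div_nonneg (sub_nonneg.2 (squeezingFn1_le_one G ζ))
        (sub_nonneg.2 (mem_ball_zero_iff.1 (h2 hζG)).le)
  calc limsup _ (𝓝[G] 1)
      ≤ limsup (squeezingBound r) (𝓝[G] 1) :=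
        limsup_le_limsup (eventually_one_sub_squeezingFn1_div_le hr0 hr2.le h1 h2) hcobdd
          hv.isBoundedUnder_le
    _ = (2 - r) / r := hv.limsup_eq

theorem squeezing_limsup_near_one (G : Set ℂ) (hG : IsOpen G) (hGc : IsConnected G)
    (r : ℝ) (hr0 : 0 < r) (hr2 : r < 2)
    (h1 : {ζ : ℂ | ‖ζ‖ < 1 ∧ ‖ζ - 1‖ < r} ⊆ G)
    (h2 : G ⊆ Metric.ball 0 1) :
    Filter.limsup (fun ζ : ℂ => (1 - squeezingFn1 G ζ) / (1 - ‖ζ‖))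
      (nhdsWithin 1 G) ≤ (2 - r) / r :=
  squeezing_limsup_near_one_general G r hr0 hr2 h1 h2
end
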